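/- Let f(z) = z/(1−z) − conj(z/(1−z) − log(1−z)) (principal branch of the logarithm) on the unit disk 𝔻. Then the family F = {f∘φ : φ ∈ Aut(𝔻)} is a normal family on 𝔻 (spherically equicontinuous on compact subsets of 𝔻 with respect to the chordal metric), although f itself is not a normal harmonic mapping. Hence the normality of the family {f∘φ : φ ∈ Aut(𝔻)} does not imply that the harmonic mapping f is normal. -/

import Mathlib

open Complex Metric Set ENNReal Filter

noncomputable section

/-- The open unit disk in the complex plane. -/
def unitDisk : Set ℂ := Metric.ball (0 : ℂ) 1

notation "𝔻" => unitDisk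

/-- The chordal distance on ℂ. -/
def chordal (z w : ℂ) : ℝ :=
  ‖z - w‖ /
    (Real.sqrt (1 + ‖z‖ ^ 2) * Real.sqrt (1 + ‖w‖ ^ 2))

/-- The hyperbolic distance on the unit disk. -/
def hypDist (z w : ℂ) : ℝ :=
  (1 / 2) * Real.log
    ((1 + ‖(z - w) / (1 - (starRingEnd ℂ) z * w)‖) /
     (1 - ‖(z - w) / (1 - (starRingEnd ℂ) z * w)‖))

/-- The harmonic mapping `f = h + conj g`. -/
def harmMap (h g : ℂ → ℂ) : ℂ → ℂ := fun z => h z + (starRingEnd ℂ) (g z)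

/-- The quantity `(1 - |z|²) (|h'(z)| + |g'(z)|) / (1 + |f(z)|²)` for `f = h + conj g`. -/
def nQuot (h g : ℂ → ℂ) (z : ℂ) : ℝ :=
  (1 - ‖z‖ ^ 2) * (‖deriv h z‖ + ‖deriv g z‖) /
    (1 + ‖harmMap h g z‖ ^ 2)

/-- `‖f‖ₙ`, the normality norm of the harmonic mapping `f = h + conj g`,
as an element of `[0, ∞]`. -/
def harmNorm (h g : ℂ → ℂ) : ℝ≥0∞ :=
  ⨆ z ∈ 𝔻, ENNReal.ofReal (nQuot h g z)

/-- `φ` is a conformal automorphism of the unit disk. -/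
def IsDiskAut (φ : ℂ → ℂ) : Prop :=
  DifferentiableOn ℂ φ 𝔻 ∧ Set.MapsTo φ 𝔻 𝔻 ∧
    ∃ ψ : ℂ → ℂ, DifferentiableOn ℂ ψ 𝔻 ∧ Set.MapsTo ψ 𝔻 𝔻 ∧
      (∀ z ∈ 𝔻, ψ (φ z) = z) ∧ (∀ z ∈ 𝔻, φ (ψ z) = z)

/-!
Since `h + g = log (1 - z)`, the real part of `f = h + conj g` is `log |1 - z|`, so `|f| → ∞` at
`1`, while away from `1` the derivatives of `h` and `g` are bounded. Hence `f` is uniformly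
continuous from the euclidean to the chordal metric on `𝔻`. By the Cauchy estimate, holomorphic
self-maps of `𝔻` are uniformly Lipschitz on each compact subset, so the family `{f ∘ φ}` is
equicontinuous. Along the radius `z = 1 - t`, however, `(1 - |z|²) |h'(z)| ≥ 1 / t` while
`|f(z)| = |log t|`, so the normality quotient is unbounded.
-/

open ComplexConjugate

def h₀ (z : ℂ) : ℂ := z / (1 - z)

def g₀ (z : ℂ) : ℂ := Complex.log (1 - z) - h₀ z

def ChordalUniformContinuousOn (F : ℂ → ℂ) (s : Set ℂ) : Prop :=
  ∀ ε > (0 : ℝ), ∃ δ > (0 : ℝ), ∀ a ∈ s, ∀ b ∈ s, ‖a - b‖ < δ → chordal (F a) (F b) < ε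

lemma mem_unitDisk_iff {z : ℂ} : z ∈ 𝔻 ↔ ‖z‖ < 1 := mem_ball_zero_iff

lemma one_sub_ne_zero_of_mem_unitDisk {z : ℂ} (hz : z ∈ 𝔻) : 1 - z ≠ 0 :=
  sub_ne_zero.2 fun h => by simp [← h, mem_unitDisk_iff] at hz

lemma one_sub_mem_slitPlane {z : ℂ} (hz : z ∈ 𝔻) : 1 - z ∈ slitPlane := by
  rw [sub_eq_add_neg]
  exact mem_slitPlane_of_norm_lt_one (by simpa using mem_unitDisk_iff.1 hz)

lemma norm_sub_le_of_mapsTo_unitDisk {φ : ℂ → ℂ} (hd : DifferentiableOn ℂ φ 𝔻)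
    (hm : MapsTo φ 𝔻 𝔻) {R : ℝ} (hR : R < 1) {z w : ℂ} (hz : z ∈ ball 0 R)
    (hw : w ∈ ball 0 R) : ‖φ z - φ w‖ ≤ 2 / (1 - R) * ‖z - w‖ := by
  have hsub : ∀ u ∈ ball (0 : ℂ) R, ball u (1 - R) ⊆ 𝔻 := fun u hu =>
    ball_subset_ball' (by rw [mem_ball] at hu; linarith)
  have hmaps : ∀ u ∈ ball (0 : ℂ) R, MapsTo φ (ball u (1 - R)) (closedBall (φ u) 2) :=
    fun u hu v hv => by
      have hφv := hm (hsub u hu hv)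
      have hφu := hm (hsub u hu (mem_ball_self (by linarith)))
      rw [unitDisk, mem_ball] at hφv hφu
      rw [mem_closedBall]
      linarith [dist_triangle_right (φ v) (φ u) 0]
  exact (convex_ball 0 R).norm_image_sub_le_of_norm_deriv_le
    (fun u hu => hd.differentiableAt
      (isOpen_ball.mem_nhds (hsub u hu (mem_ball_self (by linarith)))))
    (fun u hu => norm_deriv_le_div_of_mapsTo_ball (hd.mono (hsub u hu)) (hmaps u hu)
      (by linarith)) hw hz

theorem ChordalUniformContinuousOn.comp_selfMap {F : ℂ → ℂ}
    (hF : ChordalUniformContinuousOn F 𝔻) {K : Set ℂ} (hK : K ⊆ 𝔻) (hKc : IsCompact K)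
    {ε : ℝ} (hε : 0 < ε) :
    ∃ δ > (0 : ℝ), ∀ φ : ℂ → ℂ, DifferentiableOn ℂ φ 𝔻 → MapsTo φ 𝔻 𝔻 →
      ∀ z ∈ K, ∀ w ∈ K, ‖z - w‖ < δ → chordal (F (φ z)) (F (φ w)) < ε := by
  obtain ⟨η, hη, hFη⟩ := hF ε hε
  obtain ⟨R, hR, hKR⟩ := exists_lt_subset_ball hKc.isClosed hK
  have hR' : 0 < 1 - R := by linarith
  refine ⟨(1 - R) / 2 * η, mul_pos (half_pos hR') hη, fun φ hd hm z hz w hw hzw => ?_⟩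
  refine hFη _ (hm (hK hz)) _ (hm (hK hw)) ?_
  calc ‖φ z - φ w‖ ≤ 2 / (1 - R) * ‖z - w‖ :=
        norm_sub_le_of_mapsTo_unitDisk hd hm hR (hKR hz) (hKR hw)
    _ < 2 / (1 - R) * ((1 - R) / 2 * η) := by gcongr
    _ = η := by field_simp

lemma chordal_le_norm_sub (p q : ℂ) : chordal p q ≤ ‖p - q‖ :=
  div_le_self (norm_nonneg _) <| one_le_mul_of_one_le_of_one_le
    (Real.one_le_sqrt.2 (le_add_of_nonneg_right (sq_nonneg _)))
    (Real.one_le_sqrt.2 (le_add_of_nonneg_right (sq_nonneg _)))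

lemma chordal_le_two_div {p q : ℂ} {L : ℝ} (hL : 0 < L) (hp : L ≤ ‖p‖) (hq : L ≤ ‖q‖) :
    chordal p q ≤ 2 / L := by
  have hsqrt (x : ℂ) : ‖x‖ ≤ √(1 + ‖x‖ ^ 2) := Real.le_sqrt_of_sq_le (by linarith)
  have hp0 : 0 < ‖p‖ := hL.trans_le hp
  have hq0 : 0 < ‖q‖ := hL.trans_le hq
  calc chordal p q ≤ (‖p‖ + ‖q‖) / (‖p‖ * ‖q‖) :=
        div_le_div₀ (by positivity) (norm_sub_le p q) (by positivity)
          (mul_le_mul (hsqrt p) (hsqrt q) hq0.le (by positivity))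
    _ = ‖p‖⁻¹ + ‖q‖⁻¹ := by field_simp; ring
    _ ≤ L⁻¹ + L⁻¹ := by gcongr
    _ = 2 / L := by ring

lemma harmMap_h₀_g₀ (z : ℂ) :
    harmMap h₀ g₀ z = h₀ z - conj (h₀ z) + conj (Complex.log (1 - z)) := by
  simp only [harmMap, g₀, map_sub]
  ring

lemma re_harmMap_h₀_g₀ (z : ℂ) : (harmMap h₀ g₀ z).re = Real.log ‖1 - z‖ := by
  simp [harmMap_h₀_g₀, Complex.log_re]

lemma le_norm_harmMap_h₀_g₀ {z : ℂ} (hz : z ∈ 𝔻) {L : ℝ} (h : ‖1 - z‖ ≤ Real.exp (-L)) :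
    L ≤ ‖harmMap h₀ g₀ z‖ := by
  have hpos : 0 < ‖1 - z‖ := norm_pos_iff.2 (one_sub_ne_zero_of_mem_unitDisk hz)
  calc L ≤ -Real.log ‖1 - z‖ := by
        linarith [Real.log_le_log hpos h, Real.log_exp (-L)]
    _ ≤ |(harmMap h₀ g₀ z).re| := by rw [re_harmMap_h₀_g₀]; exact neg_le_abs _
    _ ≤ ‖harmMap h₀ g₀ z‖ := abs_re_le_norm _

lemma hasDerivAt_h₀ {z : ℂ} (hz : 1 - z ≠ 0) : HasDerivAt h₀ ((1 - z) ^ 2)⁻¹ z := by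
  refine ((hasDerivAt_id' z).div ((hasDerivAt_id' z).const_sub 1) hz).congr_deriv ?_
  field_simp
  ring

lemma hasDerivAt_log_one_sub {z : ℂ} (hz : 1 - z ∈ slitPlane) :
    HasDerivAt (fun w => Complex.log (1 - w)) (-(1 - z)⁻¹) z := by
  refine (((hasDerivAt_id' z).const_sub 1).clog hz).congr_deriv ?_
  ring

lemma norm_harmMap_h₀_g₀_sub_le {s : Set ℂ} (hs : Convex ℝ s) (hsD : s ⊆ 𝔻) {c : ℝ}
    (hc : 0 < c) (hsc : ∀ z ∈ s, c ≤ ‖1 - z‖) {a b : ℂ} (ha : a ∈ s) (hb : b ∈ s) :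
    ‖harmMap h₀ g₀ a - harmMap h₀ g₀ b‖ ≤ (2 / c ^ 2 + 1 / c) * ‖a - b‖ := by
  have hH : ‖h₀ a - h₀ b‖ ≤ 1 / c ^ 2 * ‖a - b‖ :=
    hs.norm_image_sub_le_of_norm_hasDerivWithin_le
      (fun z hz => (hasDerivAt_h₀ (one_sub_ne_zero_of_mem_unitDisk (hsD hz))).hasDerivWithinAt)
      (fun z hz => by
        rw [norm_inv, norm_pow, one_div]
        gcongr
        exact hsc z hz) hb ha
  have hL : ‖Complex.log (1 - a) - Complex.log (1 - b)‖ ≤ 1 / c * ‖a - b‖ :=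
    hs.norm_image_sub_le_of_norm_hasDerivWithin_le
      (fun z hz => (hasDerivAt_log_one_sub (one_sub_mem_slitPlane (hsD hz))).hasDerivWithinAt)
      (fun z hz => by
        rw [norm_neg, norm_inv, one_div]
        gcongr
        exact hsc z hz) hb ha
  calc ‖harmMap h₀ g₀ a - harmMap h₀ g₀ b‖
      = ‖(h₀ a - h₀ b) - conj (h₀ a - h₀ b)
          + conj (Complex.log (1 - a) - Complex.log (1 - b))‖ := by
        simp only [harmMap_h₀_g₀, map_sub]
        ring_nf
    _ ≤ 2 * ‖h₀ a - h₀ b‖ + ‖Complex.log (1 - a) - Complex.log (1 - b)‖ := by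
        refine (norm_add_le _ _).trans ?_
        rw [Complex.norm_conj]
        gcongr
        exact (norm_sub_le _ _).trans_eq (by rw [Complex.norm_conj]; ring)
    _ ≤ 2 * (1 / c ^ 2 * ‖a - b‖) + 1 / c * ‖a - b‖ := by gcongr
    _ = (2 / c ^ 2 + 1 / c) * ‖a - b‖ := by ring

theorem chordalUniformContinuousOn_harmMap_h₀_g₀ :
    ChordalUniformContinuousOn (harmMap h₀ g₀) 𝔻 := by
  intro ε hε
  set L := 3 / ε
  set r := Real.exp (-L)
  set c := r / 4 with hc_def
  set C := 2 / c ^ 2 + 1 / c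
  have hc : 0 < c := by positivity
  refine ⟨min c (ε / (C + 1)), by positivity, fun a ha b hb hab => ?_⟩
  have habc : ‖a - b‖ < c := hab.trans_le (min_le_left _ _)
  rcases lt_or_ge ‖1 - a‖ (2 * c) with hnear | hfar
  · have hb1 : ‖1 - b‖ ≤ r := by
      linarith [norm_sub_le_norm_sub_add_norm_sub 1 a b]
    calc chordal (harmMap h₀ g₀ a) (harmMap h₀ g₀ b) ≤ 2 / L :=
          chordal_le_two_div (by positivity) (le_norm_harmMap_h₀_g₀ ha (by linarith))
            (le_norm_harmMap_h₀_g₀ hb hb1)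
      _ < ε := by
          rw [div_lt_iff₀ (by positivity)]
          simp only [L]
          field_simp
          norm_num
  · have hsc : ∀ z ∈ 𝔻 ∩ ball a c, c ≤ ‖1 - z‖ := fun z hz => by
      have hza : ‖z - a‖ < c := by rw [← dist_eq_norm]; exact hz.2
      linarith [norm_sub_le_norm_sub_add_norm_sub 1 z a]
    have hbs : b ∈ ball a c := by rwa [mem_ball, dist_comm, dist_eq_norm]
    calc chordal (harmMap h₀ g₀ a) (harmMap h₀ g₀ b)
        ≤ ‖harmMap h₀ g₀ a - harmMap h₀ g₀ b‖ := chordal_le_norm_sub _ _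
      _ ≤ C * ‖a - b‖ :=
          norm_harmMap_h₀_g₀_sub_le ((convex_ball 0 1).inter (convex_ball a c))
            inter_subset_left hc hsc ⟨ha, mem_ball_self hc⟩ ⟨hb, hbs⟩
      _ ≤ C * (ε / (C + 1)) := by gcongr; exact hab.le.trans (min_le_right _ _)
      _ < ε := by
          rw [mul_div_assoc', div_lt_iff₀ (by positivity)]
          nlinarith

lemma norm_one_sub_ofReal {t : ℝ} (ht : t ≤ 1) : ‖1 - (t : ℂ)‖ = 1 - t := by
  rw [← Complex.ofReal_one, ← Complex.ofReal_sub, norm_real, Real.norm_of_nonneg (by linarith)]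

lemma exp_div_le_nQuot_h₀_g₀ {M : ℝ} (hM : 0 < M) :
    Real.exp M / (1 + M ^ 2) ≤ nQuot h₀ g₀ (1 - (Real.exp (-M) : ℂ)) := by
  set t := Real.exp (-M)
  have ht0 : 0 < t := Real.exp_pos _
  have ht1 : t < 1 := Real.exp_lt_one_iff.2 (neg_neg_of_pos hM)
  have hz : (1 : ℂ) - (1 - (t : ℂ)) = t := by ring
  have hval : harmMap h₀ g₀ (1 - t) = (Real.log t : ℂ) := by
    have hreal : h₀ (1 - t) = ((1 - t) / t : ℝ) := by simp [h₀, hz]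
    rw [harmMap_h₀_g₀, hreal, hz, ← ofReal_log ht0.le, conj_ofReal, conj_ofReal]
    ring
  have hnorm_val : ‖harmMap h₀ g₀ (1 - t)‖ = M := by
    rw [hval, norm_real, Real.norm_eq_abs, Real.log_exp, abs_neg, abs_of_pos hM]
  have hnorm_deriv : ‖deriv h₀ (1 - t)‖ = (t ^ 2)⁻¹ := by
    rw [(hasDerivAt_h₀ (by rw [hz]; exact_mod_cast ht0.ne')).deriv, hz, norm_inv, norm_pow,
      norm_real, Real.norm_of_nonneg ht0.le]
  rw [nQuot, hnorm_val, hnorm_deriv, norm_one_sub_ofReal ht1.le]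
  gcongr
  calc Real.exp M = t * (t ^ 2)⁻¹ := by
        field_simp
        rw [← Real.exp_add]
        simp
    _ ≤ (1 - (1 - t) ^ 2) * ((t ^ 2)⁻¹ + ‖deriv g₀ (1 - t)‖) :=
        mul_le_mul (by nlinarith) (le_add_of_nonneg_right (norm_nonneg _)) (by positivity)
          (by nlinarith)

lemma harmNorm_eq_top_of_tendsto {h g : ℂ → ℂ} {ι : Type*} {l : Filter ι} [l.NeBot]
    {u : ι → ℂ} (hu : ∀ᶠ i in l, u i ∈ 𝔻) (hq : Tendsto (fun i => nQuot h g (u i)) l atTop) :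
    harmNorm h g = ⊤ := by
  refine ENNReal.eq_top_of_forall_nnreal_le fun x => ?_
  obtain ⟨i, hi, hx⟩ := (hu.and (hq.eventually_ge_atTop x)).exists
  calc (x : ℝ≥0∞) = ENNReal.ofReal x := (ofReal_coe_nnreal).symm
    _ ≤ ENNReal.ofReal (nQuot h g (u i)) := ofReal_le_ofReal hx
    _ ≤ harmNorm h g :=
        le_iSup₂ (f := fun z (_ : z ∈ 𝔻) => ENNReal.ofReal (nQuot h g z)) (u i) hi

lemma tendsto_nQuot_h₀_g₀ :
    Tendsto (fun M : ℝ => nQuot h₀ g₀ (1 - (Real.exp (-M) : ℂ))) atTop atTop := by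
  refine tendsto_atTop_mono' atTop ?_
    ((Real.tendsto_exp_div_pow_atTop 2).atTop_div_const two_pos)
  filter_upwards [eventually_ge_atTop 1] with M hM
  calc Real.exp M / M ^ 2 / 2 ≤ Real.exp M / (1 + M ^ 2) := by
        rw [div_div]
        gcongr
        nlinarith
    _ ≤ _ := exp_div_le_nQuot_h₀_g₀ (by linarith)

theorem normal_family_not_normal_mapping :
    let h : ℂ → ℂ := fun z => z / (1 - z)
    let g : ℂ → ℂ := fun z => Complex.log (1 - z) - z / (1 - z)
    (∀ K ⊆ 𝔻, IsCompact K → ∀ ε > (0 : ℝ), ∃ δ > (0 : ℝ),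
      ∀ φ : ℂ → ℂ, IsDiskAut φ → ∀ z ∈ K, ∀ w ∈ K, ‖z - w‖ < δ →
        chordal (harmMap h g (φ z)) (harmMap h g (φ w)) < ε) ∧
    harmNorm h g = ⊤ := by
  intro h g
  refine ⟨fun K hK hKc ε hε => ?_, ?_⟩
  · obtain ⟨δ, hδ, hequi⟩ := chordalUniformContinuousOn_harmMap_h₀_g₀.comp_selfMap hK hKc hε
    exact ⟨δ, hδ, fun φ hφ => hequi φ hφ.1 hφ.2.1⟩
  · refine harmNorm_eq_top_of_tendsto ?_ tendsto_nQuot_h₀_g₀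
    filter_upwards [eventually_gt_atTop 0] with M hM
    rw [mem_unitDisk_iff, norm_one_sub_ofReal (Real.exp_le_one_iff.2 (by linarith))]
    linarith [Real.exp_pos (-M)]
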